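/- The map F : ℂ⁵ → ℂ⁵ defined by F(x, y, z, t, u) = (xy, x², −yz, −xt, 2zt − xu) satisfies F(F(x, y, z, t, u)) = x²y · (x, y, z, t, u) for every (x, y, z, t, u) ∈ ℂ⁵. -/
import Mathlib


/-- The adjoint map of the Jordan algebra `𝒥₉⁵`:
`F(x,y,z,t,u) = (xy, x², −yz, −xt, 2zt − xu)`. -/
def FJ9 : (ℂ × ℂ × ℂ × ℂ × ℂ) → (ℂ × ℂ × ℂ × ℂ × ℂ) :=
  fun p => (p.1 * p.2.1, p.1 ^ 2, -(p.2.1 * p.2.2.1),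
    -(p.1 * p.2.2.2.1), 2 * p.2.2.1 * p.2.2.2.1 - p.1 * p.2.2.2.2)

/-- `F(F(x,y,z,t,u)) = x²y · (x,y,z,t,u)` for every `(x,y,z,t,u) ∈ ℂ⁵`. -/
theorem FJ9_involutive (x y z t u : ℂ) :
    FJ9 (FJ9 (x, y, z, t, u)) = (x ^ 2 * y) • ((x, y, z, t, u) : ℂ × ℂ × ℂ × ℂ × ℂ) := by
  simp only [FJ9, Prod.smul_def, smul_eq_mul]
  refine Prod.ext (by ring) (Prod.ext (by ring) (Prod.ext (by ring) (Prod.ext (by ring) (by ring))))
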